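/- arXiv:1201.3586 — 3 statements merged into one kernel-verified Lean document; each statement's English description precedes it below -/
import Mathlib

section
/- Let p > 2, q > p - 1, α > 0, M > 0, and let {|Q|}_{Q} be the volumes of dyadic cubes where a cube of side length ℓ(Q) has volume comparable to ℓ(Q)^M. For a nonnegative measure μ and a fixed dyadic cube P, if 0 < ε < αp/((p-1)M), then for every dyadic cube Q ⊂ P, Σ_{Q'⊂Q} μ(Q')^{1/(p-1)} / |Q'|^{(1-αp/M)·1/(p-1) - 1} ≤ C μ(Q)^{1/(p-1)} / |Q|^{(1-αp/M)·1/(p-1) - 1}, where C depends only on p, α, M, ε; the proof uses Hölder's inequality with exponents r' = p-1 and r = (p-1)/(p-2) and the geometric summability of |Q'|^{-r(1-αp/M)/(p-1) + r - rε} over dyadic subcubes of Q. -/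
/-!
Put `θ = 1/(p-1)` and `δ = θ α p / M > 0`; the summand is then `μ(Q')^θ |Q'|^((1-θ) + δ)`.
Exact ball volumes `c R^M` make `|Q'|` comparable to `λ^(M gen Q')`, so a subcube of `Q` has
generation at most `gen Q + 1`. Split the sum by generation. The cubes of one generation are
disjoint subsets of `Q`, so Hölder's inequality with exponents `1/θ` and `1/(1-θ)` bounds
`Σ μ(Q')^θ |Q'|^(1-θ)` over them by `μ(Q)^θ |Q|^(1-θ)`, while the leftover factor `|Q'|^δ` is
at most `(λ^(M(2-n)) |Q|)^δ` on the `n`-th generation below `gen Q + 1`. Summing the geometric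
series in `n` gives the constant.
-/

open MeasureTheory ENNReal Set

/-- A dyadic cube decomposition of a metric measure space (Sawyer–Wheeden/Christ). -/
structure MetricDyadicGrid (X : Type*) [MetricSpace X] [MeasurableSpace X] (lam : ℝ) where
  ι : Type
  countable : Countable ι
  cube : ι → Set X
  gen : ι → ℤ
  base : ℤ
  base_le : ∀ i, base ≤ gen i
  measurableSet : ∀ i, MeasurableSet (cube i)
  pairwise_disjoint : ∀ i j, i ≠ j → gen i = gen j → Disjoint (cube i) (cube j)
  cover : ∀ k : ℤ, base ≤ k → (⋃ i ∈ {i | gen i = k}, cube i) = Set.univ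
  nested : ∀ i j, gen i ≤ gen j → cube i ⊆ cube j ∨ Disjoint (cube i) (cube j)
  center : ι → X
  ball_subset : ∀ i, Metric.ball (center i) (lam ^ gen i) ⊆ cube i
  subset_ball : ∀ i, cube i ⊆ Metric.ball (center i) (lam ^ (gen i + 1))

open Function

theorem ENNReal.tsum_rpow_mul_rpow_le {ι : Type*} (f g : ι → ℝ≥0∞) {p q : ℝ}
    (hp : 0 ≤ p) (hq : 0 ≤ q) (hpq : p + q = 1) :
    ∑' i, f i ^ p * g i ^ q ≤ (∑' i, f i) ^ p * (∑' i, g i) ^ q := by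
  let _ : MeasurableSpace ι := ⊤
  simpa only [lintegral_count] using ENNReal.lintegral_mul_norm_pow_le (μ := Measure.count)
    (measurable_from_top (f := f)).aemeasurable (measurable_from_top (f := g)).aemeasurable
    hp hq hpq

theorem MeasureTheory.tsum_measure_rpow_mul_rpow_le {X ι : Type*} [MeasurableSpace X]
    (μ ν : Measure X) {s : ι → Set X} {t : Set X} (hs : ∀ i, MeasurableSet (s i))
    (hdisj : Pairwise (Disjoint on s)) (hst : ∀ i, s i ⊆ t) {p q : ℝ}
    (hp : 0 ≤ p) (hq : 0 ≤ q) (hpq : p + q = 1) :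
    ∑' i, μ (s i) ^ p * ν (s i) ^ q ≤ μ t ^ p * ν t ^ q := by
  have hsum (ρ : Measure X) : ∑' i, ρ (s i) ≤ ρ t :=
    (tsum_meas_le_meas_iUnion_of_disjoint ρ hs hdisj).trans (measure_mono (iUnion_subset hst))
  calc ∑' i, μ (s i) ^ p * ν (s i) ^ q ≤ (∑' i, μ (s i)) ^ p * (∑' i, ν (s i)) ^ q :=
        ENNReal.tsum_rpow_mul_rpow_le _ _ hp hq hpq
    _ ≤ μ t ^ p * ν t ^ q := by gcongr <;> apply hsum

theorem tsum_ofReal_rpow_mul_sub_lt_top {b a : ℝ} (hb : 1 < b) (ha : 0 < a) (m : ℝ) :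
    ∑' n : ℕ, ENNReal.ofReal (b ^ (a * (m - n))) < ∞ := by
  have hb0 : 0 < b := zero_lt_one.trans hb
  have hterm (n : ℕ) : ENNReal.ofReal (b ^ (a * (m - n))) =
      ENNReal.ofReal (b ^ (m * a)) * ENNReal.ofReal (b ^ (-a)) ^ n := by
    rw [← ENNReal.ofReal_pow (by positivity), ← ENNReal.ofReal_mul (by positivity),
      ← Real.rpow_natCast, ← Real.rpow_mul hb0.le, ← Real.rpow_add hb0]
    ring_nf
  simp_rw [hterm, ENNReal.tsum_mul_left, ENNReal.tsum_geometric]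
  refine ENNReal.mul_lt_top ofReal_lt_top (ENNReal.inv_lt_top.2 (tsub_pos_of_lt ?_))
  exact ENNReal.ofReal_lt_one.2 (Real.rpow_lt_one_of_one_lt_of_neg hb (neg_neg_of_pos ha))

def HasBallVolume {G : Type*} [MetricSpace G] [MeasurableSpace G] (vol : Measure G)
    (c : ℝ≥0∞) (M : ℝ) : Prop :=
  ∀ (x : G) (R : ℝ), 0 < R → vol (Metric.ball x R) = c * ENNReal.ofReal (R ^ M)

namespace MetricDyadicGrid

variable {G : Type*} [MetricSpace G] [MeasurableSpace G] {lam M : ℝ} {c : ℝ≥0∞}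
  {vol : Measure G} (D : MetricDyadicGrid G lam)

theorem le_measure_cube (hlam : 0 < lam) (hvol : HasBallVolume vol c M) (i : D.ι) :
    c * ENNReal.ofReal ((lam ^ D.gen i) ^ M) ≤ vol (D.cube i) := by
  rw [← hvol _ _ (zpow_pos hlam _)]
  exact measure_mono (D.ball_subset i)

theorem measure_cube_le (hlam : 0 < lam) (hvol : HasBallVolume vol c M) (i : D.ι) :
    vol (D.cube i) ≤ c * ENNReal.ofReal ((lam ^ (D.gen i + 1)) ^ M) := by
  rw [← hvol _ _ (zpow_pos hlam _)]
  exact measure_mono (D.subset_ball i)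

theorem measure_cube_le_mul (hlam : 0 < lam) (hvol : HasBallVolume vol c M) (i j : D.ι) :
    vol (D.cube i) ≤ vol (D.cube j) * ENNReal.ofReal (lam ^ (M * (D.gen i + 1 - D.gen j))) := by
  calc vol (D.cube i) ≤ c * ENNReal.ofReal ((lam ^ (D.gen i + 1)) ^ M) :=
        D.measure_cube_le hlam hvol i
    _ = c * ENNReal.ofReal ((lam ^ D.gen j) ^ M) *
          ENNReal.ofReal (lam ^ (M * (D.gen i + 1 - D.gen j))) := by
        rw [mul_assoc, ← ENNReal.ofReal_mul (by positivity), ← Real.rpow_intCast,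
          ← Real.rpow_intCast, ← Real.rpow_mul hlam.le, ← Real.rpow_mul hlam.le,
          ← Real.rpow_add hlam]
        push_cast
        ring_nf
    _ ≤ vol (D.cube j) * ENNReal.ofReal (lam ^ (M * (D.gen i + 1 - D.gen j))) := by
        gcongr
        exact D.le_measure_cube hlam hvol j

theorem gen_le_gen_add_one_of_subset (hlam : 1 < lam) (hM : 0 < M) (hc : c ≠ 0)
    (hc' : c ≠ ∞) (hvol : HasBallVolume vol c M) {i j : D.ι} (h : D.cube i ⊆ D.cube j) :
    D.gen i ≤ D.gen j + 1 := by
  have hlam0 : 0 < lam := zero_lt_one.trans hlam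
  have key := (D.le_measure_cube hlam0 hvol i).trans
    ((measure_mono h).trans (D.measure_cube_le hlam0 hvol j))
  rwa [ENNReal.mul_le_mul_iff_right hc hc', ENNReal.ofReal_le_ofReal_iff (by positivity),
    Real.rpow_le_rpow_iff (by positivity) (by positivity) hM, zpow_le_zpow_iff_right₀ hlam]
    at key

theorem tsum_cubes_of_gen_rpow_mul_rpow_le (hlam : 0 < lam) (hvol : HasBallVolume vol c M)
    (μ : Measure G) {θ σ δ : ℝ} (hθ : 0 ≤ θ) (hσ : 0 ≤ σ) (hθσ : θ + σ = 1) (hδ : 0 ≤ δ)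
    {κ : Type*} {e : κ → D.ι} (he : Injective e) {k : ℤ} (hgen : ∀ t, D.gen (e t) = k) {Q : D.ι}
    (hsub : ∀ t, D.cube (e t) ⊆ D.cube Q) :
    ∑' t, μ (D.cube (e t)) ^ θ * vol (D.cube (e t)) ^ (σ + δ) ≤
      ENNReal.ofReal (lam ^ (M * δ * (k + 1 - D.gen Q))) *
        (μ (D.cube Q) ^ θ * vol (D.cube Q) ^ (σ + δ)) := by
  have hdisj : Pairwise (Disjoint on fun t => D.cube (e t)) := fun a b hab =>
    D.pairwise_disjoint _ _ (he.ne hab) ((hgen a).trans (hgen b).symm)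
  set F := vol (D.cube Q) * ENNReal.ofReal (lam ^ (M * (k + 1 - D.gen Q)))
  have hvol_le (t : κ) : vol (D.cube (e t)) ≤ F := by
    simpa only [hgen] using D.measure_cube_le_mul hlam hvol (e t) Q
  calc ∑' t, μ (D.cube (e t)) ^ θ * vol (D.cube (e t)) ^ (σ + δ)
      ≤ ∑' t, μ (D.cube (e t)) ^ θ * vol (D.cube (e t)) ^ σ * F ^ δ := by
        refine ENNReal.tsum_le_tsum fun t => ?_
        rw [ENNReal.rpow_add_of_nonneg _ _ hσ hδ, ← mul_assoc]
        gcongr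
        exact hvol_le t
    _ = (∑' t, μ (D.cube (e t)) ^ θ * vol (D.cube (e t)) ^ σ) * F ^ δ := ENNReal.tsum_mul_right
    _ ≤ μ (D.cube Q) ^ θ * vol (D.cube Q) ^ σ * F ^ δ := by
        gcongr
        exact tsum_measure_rpow_mul_rpow_le μ vol (fun _ => D.measurableSet _) hdisj hsub
          hθ hσ hθσ
    _ = ENNReal.ofReal (lam ^ (M * δ * (k + 1 - D.gen Q))) *
          (μ (D.cube Q) ^ θ * vol (D.cube Q) ^ (σ + δ)) := by
        rw [ENNReal.mul_rpow_of_nonneg _ _ hδ, ENNReal.ofReal_rpow_of_nonneg (by positivity) hδ,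
          ← Real.rpow_mul hlam.le, ENNReal.rpow_add_of_nonneg _ _ hσ hδ]
        ring_nf

theorem tsum_subcubes_rpow_mul_rpow_le (hlam : 1 < lam) (hM : 0 < M) (hc : c ≠ 0)
    (hc' : c ≠ ∞) (hvol : HasBallVolume vol c M) (μ : Measure G) {θ σ δ : ℝ} (hθ : 0 ≤ θ)
    (hσ : 0 ≤ σ) (hθσ : θ + σ = 1) (hδ : 0 ≤ δ) (Q : D.ι) :
    ∑' Q' : {Q' : D.ι // D.cube Q' ⊆ D.cube Q},
        μ (D.cube Q'.1) ^ θ * vol (D.cube Q'.1) ^ (σ + δ) ≤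
      (∑' n : ℕ, ENNReal.ofReal (lam ^ (M * δ * (2 - n)))) *
        (μ (D.cube Q) ^ θ * vol (D.cube Q) ^ (σ + δ)) := by
  let layer (Q' : {Q' : D.ι // D.cube Q' ⊆ D.cube Q}) : ℕ := (D.gen Q + 1 - D.gen Q'.1).toNat
  rw [← ENNReal.tsum_fiberwise _ layer, ← ENNReal.tsum_mul_right]
  refine ENNReal.tsum_le_tsum fun n => ?_
  have hgen (Q' : layer ⁻¹' {n}) : D.gen Q'.1.1 = D.gen Q + 1 - n := by
    have hle := D.gen_le_gen_add_one_of_subset hlam hM hc hc' hvol Q'.1.2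
    have hn : (D.gen Q + 1 - D.gen Q'.1.1).toNat = n := Q'.2
    omega
  convert D.tsum_cubes_of_gen_rpow_mul_rpow_le (zero_lt_one.trans hlam) hvol μ hθ hσ hθσ hδ
    (e := fun Q' : layer ⁻¹' {n} => Q'.1.1) (fun _ _ h => Subtype.ext (Subtype.ext h)) hgen
    (fun Q' => Q'.1.2) using 5
  push_cast
  ring

end MetricDyadicGrid

theorem stmt_1_general (M α p lam : ℝ) (c : ℝ≥0∞) (hα : 0 < α) (hp : 2 < p)
    (hM : 0 < M) (hlam : lam = 8) (hc : 0 < c) (hc' : c < ∞) :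
    ∃ C : ℝ≥0∞, 0 < C ∧ C < ∞ ∧
      ∀ (G : Type) (_ : MetricSpace G) (m : MeasurableSpace G) (_ : BorelSpace G)
        (vol : Measure G)
        (_ : ∀ (x : G) (R : ℝ), 0 < R → vol (Metric.ball x R) = c * ENNReal.ofReal (R ^ M))
        (D : MetricDyadicGrid G lam) (P : D.ι) (μ : Measure G)
        (Q : D.ι), D.cube Q ⊆ D.cube P →
        ∑' Q' : {Q' : D.ι // D.cube Q' ⊆ D.cube Q},
            (μ (D.cube Q'.1)) ^ (1 / (p - 1)) /
              (vol (D.cube Q'.1)) ^ ((1 - α * p / M) * (1 / (p - 1)) - 1) ≤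
          C * ((μ (D.cube Q)) ^ (1 / (p - 1)) /
            (vol (D.cube Q)) ^ ((1 - α * p / M) * (1 / (p - 1)) - 1)) := by
  subst hlam
  set θ : ℝ := 1 / (p - 1)
  have hθ : 0 < θ := one_div_pos.2 (by linarith)
  have hθ_le : θ ≤ 1 := (div_le_one (by linarith)).2 (by linarith)
  set δ : ℝ := θ * (α * p / M)
  have hδ : 0 < δ := by positivity
  have hexp : (1 - α * p / M) * θ - 1 = -((1 - θ) + δ) := by ring
  refine ⟨∑' n : ℕ, ENNReal.ofReal ((8 : ℝ) ^ (M * δ * (2 - n))),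
    (ENNReal.ofReal_pos.2 (by positivity)).trans_le (ENNReal.le_tsum 0),
    tsum_ofReal_rpow_mul_sub_lt_top (by norm_num) (by positivity) 2, ?_⟩
  intro G _ _ _ vol hvol D _ μ Q _
  rw [hexp]
  simp only [div_eq_mul_inv, ENNReal.rpow_neg, inv_inv]
  exact D.tsum_subcubes_rpow_mul_rpow_le (by norm_num) hM hc.ne' hc'.ne hvol μ (σ := 1 - θ)
    hθ.le (by linarith) (by ring) hδ.le Q

/-- The Hölder-inequality step in the proof of the comparability of `B_2` and `B_3`
(case `p > 2`): the sum `Σ_{Q'⊂Q} μ(Q')^{1/(p-1)} / |Q'|^{(1-αp/M)/(p-1) - 1}` is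
dominated by the corresponding single term for `Q`. -/
theorem stmt_1 (M α p q lam ε : ℝ) (c : ℝ≥0∞) (hα : 0 < α) (hp : 2 < p) (hq : p - 1 < q)
    (hM : 0 < M) (hlam : lam = 8) (hc : 0 < c) (hc' : c < ∞)
    (hε : 0 < ε) (hε' : ε < α * p / ((p - 1) * M)) :
    ∃ C : ℝ≥0∞, 0 < C ∧ C < ∞ ∧
      ∀ (G : Type) (_ : MetricSpace G) (m : MeasurableSpace G) (_ : BorelSpace G)
        (vol : Measure G)
        (_ : ∀ (x : G) (R : ℝ), 0 < R → vol (Metric.ball x R) = c * ENNReal.ofReal (R ^ M))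
        (D : MetricDyadicGrid G lam) (P : D.ι) (μ : Measure G)
        (Q : D.ι), D.cube Q ⊆ D.cube P →
        ∑' Q' : {Q' : D.ι // D.cube Q' ⊆ D.cube Q},
            (μ (D.cube Q'.1)) ^ (1 / (p - 1)) /
              (vol (D.cube Q'.1)) ^ ((1 - α * p / M) * (1 / (p - 1)) - 1) ≤
          C * ((μ (D.cube Q)) ^ (1 / (p - 1)) /
            (vol (D.cube Q)) ^ ((1 - α * p / M) * (1 / (p - 1)) - 1)) :=
  stmt_1_general M α p lam c hα hp hM hlam hc hc'
end

section
/- Let α > 0, p > 1, λ = 8, and let μ be a nonnegative Borel measure on a Carnot group G of homogeneous dimension M. For any integer m and any r > 0 with λ^m ≤ λ^{-3} r, the truncated Wolff potential satisfies the pointwise lower bound W_{α,p}^r μ(x) ≥ c Σ_{Q ∈ D_m, ℓ(Q) ≤ λ^{-3} r} [μ(Q)/|Q|^{1 - αp/M}]^{1/(p-1)} χ_Q(x) for all x, where c depends only on M, p, α. -/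
open MeasureTheory ENNReal Set

/-- The truncated Wolff potential
`W_{α,p}^r μ(x) = ∫_0^r [μ(B_t(x))/t^{M-αp}]^{1/(p-1)} dt/t`. -/
noncomputable def wolffPot {G : Type*} [MetricSpace G] [MeasurableSpace G]
    (μ : Measure G) (α p M r : ℝ) (x : G) : ℝ≥0∞ :=
  ∫⁻ t in Set.Ioo (0 : ℝ) r,
    (μ (Metric.ball x t) / ENNReal.ofReal (t ^ (M - α * p))) ^ (1 / (p - 1)) *
      ENNReal.ofReal t⁻¹

private lemma ennreal_rpow_anti {x y : ℝ≥0∞} {z : ℝ} (h : x ≤ y) (hz : z ≤ 0) :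
    y ^ z ≤ x ^ z := by
  rw [← neg_neg z, ENNReal.rpow_neg y, ENNReal.rpow_neg x]
  exact ENNReal.inv_le_inv.mpr (ENNReal.rpow_le_rpow h (neg_nonneg.mpr hz))

private lemma rpow_ne_top' {x : ℝ≥0∞} (hx : x ≠ 0) (hx' : x ≠ ⊤) (y : ℝ) : x ^ y ≠ ⊤ := by
  simp [ENNReal.rpow_eq_top_iff, hx, hx']

private lemma real64 : (64 : ℝ) = (8 : ℝ) ^ (2 : ℝ) := by
  rw [show (2 : ℝ) = ((2 : ℕ) : ℝ) from by norm_num, Real.rpow_natCast]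
  norm_num

/-- The key comparison: `t^{M-αp} ≲ V^{1-αp/M}` when `V ≍ cA a^M` and `t ≍ a`. -/
private lemma key_vol (M α p : ℝ) (cA : ℝ≥0∞) (hM : 0 < M)
    (h0 : cA ≠ 0) (h1 : cA ≠ ⊤) (V : ℝ≥0∞) (a t : ℝ) (ha : 0 < a)
    (hV1 : cA * ENNReal.ofReal (a ^ M) ≤ V)
    (hV2 : V ≤ cA * ENNReal.ofReal ((8 * a) ^ M))
    (ht1 : a ≤ t) (ht2 : t ≤ 64 * a) :
    ENNReal.ofReal (t ^ (M - α * p)) ≤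
      (cA ^ (-(1 - α * p / M)) * ENNReal.ofReal (max 1 ((8 : ℝ) ^ (2 * (M - α * p)))) *
          (ENNReal.ofReal (min 1 ((8 : ℝ) ^ (M - α * p))))⁻¹) *
        V ^ (1 - α * p / M) := by
  set β := M - α * p with hβ
  set e := 1 - α * p / M with he
  have hMe : M * e = β := by
    rw [he, hβ]; field_simp
  have ht0 : 0 < t := lt_of_lt_of_le ha ht1
  -- Step A : t ^ β ≤ a ^ β * max 1 (8 ^ (2β))
  have hstepA : t ^ β ≤ a ^ β * max 1 ((8 : ℝ) ^ (2 * β)) := by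
    rcases le_or_gt 0 β with hb | hb
    · calc t ^ β ≤ (64 * a) ^ β := Real.rpow_le_rpow ht0.le ht2 hb
        _ = (64 : ℝ) ^ β * a ^ β := Real.mul_rpow (by norm_num) ha.le
        _ = a ^ β * (8 : ℝ) ^ (2 * β) := by
            rw [real64, ← Real.rpow_mul (by norm_num : (0:ℝ) ≤ 8)]; ring
        _ ≤ a ^ β * max 1 ((8 : ℝ) ^ (2 * β)) := by
            exact mul_le_mul_of_nonneg_left (le_max_right _ _) (Real.rpow_nonneg ha.le _)
    · calc t ^ β ≤ a ^ β := Real.rpow_le_rpow_of_nonpos ha ht1 hb.le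
        _ = a ^ β * 1 := (mul_one _).symm
        _ ≤ a ^ β * max 1 ((8 : ℝ) ^ (2 * β)) := by
            exact mul_le_mul_of_nonneg_left (le_max_left _ _) (Real.rpow_nonneg ha.le _)
  -- Step B : cA^e * (min-factor * a^β) ≤ V^e
  have hstepB : cA ^ e * (ENNReal.ofReal (min 1 ((8 : ℝ) ^ β)) * ENNReal.ofReal (a ^ β))
      ≤ V ^ e := by
    rcases le_or_gt 0 e with hce | hce
    · have h' : (cA * ENNReal.ofReal (a ^ M)) ^ e ≤ V ^ e := ENNReal.rpow_le_rpow hV1 hce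
      rw [ENNReal.mul_rpow_of_ne_top h1 ENNReal.ofReal_ne_top,
        ENNReal.ofReal_rpow_of_pos (Real.rpow_pos_of_pos ha M),
        ← Real.rpow_mul ha.le, hMe] at h'
      refine le_trans ?_ h'
      apply mul_le_mul_right
      calc ENNReal.ofReal (min 1 ((8 : ℝ) ^ β)) * ENNReal.ofReal (a ^ β)
          ≤ 1 * ENNReal.ofReal (a ^ β) := by
            exact mul_le_mul_left (ENNReal.ofReal_le_one.mpr (min_le_left _ _)) _
        _ = ENNReal.ofReal (a ^ β) := one_mul _
    · have h' : (cA * ENNReal.ofReal ((8 * a) ^ M)) ^ e ≤ V ^ e :=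
        ennreal_rpow_anti hV2 hce.le
      rw [ENNReal.mul_rpow_of_ne_top h1 ENNReal.ofReal_ne_top,
        ENNReal.ofReal_rpow_of_pos (Real.rpow_pos_of_pos (by positivity) M),
        ← Real.rpow_mul (by positivity), hMe,
        Real.mul_rpow (by norm_num) ha.le,
        ENNReal.ofReal_mul (Real.rpow_nonneg (by norm_num) _)] at h'
      refine le_trans ?_ h'
      apply mul_le_mul_right
      exact mul_le_mul_left (ENNReal.ofReal_le_ofReal (min_le_right _ _)) _
  -- combine
  have hA : ENNReal.ofReal (t ^ β)
      ≤ ENNReal.ofReal (max 1 ((8 : ℝ) ^ (2 * β))) * ENNReal.ofReal (a ^ β) := by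
    rw [← ENNReal.ofReal_mul (by positivity)]
    exact ENNReal.ofReal_le_ofReal (by linarith [hstepA])
  set K : ℝ≥0∞ := ENNReal.ofReal (max 1 ((8 : ℝ) ^ (2 * β))) with hK
  set m1 : ℝ≥0∞ := ENNReal.ofReal (min 1 ((8 : ℝ) ^ β)) with hm1
  have hm10 : m1 ≠ 0 := by
    rw [hm1]
    exact (ENNReal.ofReal_pos.mpr (lt_min one_pos (Real.rpow_pos_of_pos (by norm_num) _))).ne'
  have hc : cA ^ (-e) * cA ^ e = 1 := by
    rw [← ENNReal.rpow_add _ _ h0 h1]; simp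
  have hm : m1⁻¹ * m1 = 1 := ENNReal.inv_mul_cancel hm10 ENNReal.ofReal_ne_top
  calc ENNReal.ofReal (t ^ β) ≤ K * ENNReal.ofReal (a ^ β) := hA
    _ = (cA ^ (-e) * K * m1⁻¹) * (cA ^ e * (m1 * ENNReal.ofReal (a ^ β))) := by
        rw [show (cA ^ (-e) * K * m1⁻¹) * (cA ^ e * (m1 * ENNReal.ofReal (a ^ β)))
            = (cA ^ (-e) * cA ^ e) * ((m1⁻¹ * m1) * (K * ENNReal.ofReal (a ^ β))) from by ring,
          hc, hm, one_mul, one_mul]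
    _ ≤ (cA ^ (-e) * K * m1⁻¹) * V ^ e := mul_le_mul_right hstepB _

private lemma ioo_helper {g g' : ℤ} (h : g < g') :
    Disjoint (Set.Ioo (2 * (8 : ℝ) ^ (g + 1)) (4 * (8 : ℝ) ^ (g + 1)))
      (Set.Ioo (2 * (8 : ℝ) ^ (g' + 1)) (4 * (8 : ℝ) ^ (g' + 1))) := by
  apply Set.disjoint_left.mpr
  intro t ht ht'
  have h1 : (8 : ℝ) ^ (g + 2) ≤ (8 : ℝ) ^ (g' + 1) :=
    zpow_le_zpow_right₀ (by norm_num) (by omega)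
  have h2 : (8 : ℝ) ^ (g + 2) = 8 * (8 : ℝ) ^ (g + 1) := by
    rw [show g + 2 = g + 1 + 1 from by ring, zpow_add_one₀ (by norm_num : (8:ℝ) ≠ 0)]; ring
  have h3 : (0 : ℝ) < (8 : ℝ) ^ (g + 1) := zpow_pos (by norm_num) _
  have := ht.2
  have := ht'.1
  nlinarith

/-- Pointwise lower bound for the truncated Wolff potential by a discrete dyadic sum:
`W_{α,p}^r μ(x) ≥ c Σ_{Q ∈ D_m, ℓ(Q) ≤ λ^{-3} r} [μ(Q)/|Q|^{1-αp/M}]^{1/(p-1)} χ_Q(x)`. -/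
theorem stmt_4 (M α p lam : ℝ) (cA : ℝ≥0∞) (hα : 0 < α) (hp : 1 < p) (hM : 0 < M)
    (hlam : lam = 8) (hcA : 0 < cA) (hcA' : cA < ∞) :
    ∃ c : ℝ≥0∞, 0 < c ∧
      ∀ (G : Type) (_ : MetricSpace G) (mG : MeasurableSpace G) (_ : BorelSpace G)
        (vol : Measure G)
        (_ : ∀ (x : G) (R : ℝ), 0 < R → vol (Metric.ball x R) = cA * ENNReal.ofReal (R ^ M))
        (D : MetricDyadicGrid G lam) (μ : Measure G) (r : ℝ) (_ : 0 < r)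
        (_ : lam ^ D.base ≤ r / lam ^ (3 : ℕ)) (x : G),
        c * ∑' Q : {Q : D.ι // lam ^ D.gen Q ≤ r / lam ^ (3 : ℕ)},
            Set.indicator (D.cube Q.1)
              (fun _ => (μ (D.cube Q.1) / (vol (D.cube Q.1)) ^ (1 - α * p / M)) ^
                (1 / (p - 1))) x ≤
          wolffPot μ α p M r x := by
  subst hlam
  have hp1 : (0 : ℝ) < p - 1 := by linarith
  have hqpos : (0 : ℝ) < 1 / (p - 1) := by positivity
  set β := M - α * p with hβ
  set e := 1 - α * p / M with he
  set qinv := 1 / (p - 1) with hq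
  set K : ℝ≥0∞ := ENNReal.ofReal (max 1 ((8 : ℝ) ^ (2 * β))) with hK
  set m1 : ℝ≥0∞ := ENNReal.ofReal (min 1 ((8 : ℝ) ^ β)) with hm1
  have hcA0 : cA ≠ 0 := hcA.ne'
  have hcAt : cA ≠ ⊤ := hcA'.ne
  set C₁ : ℝ≥0∞ := cA ^ (-e) * K * m1⁻¹ with hC₁
  have hK0 : K ≠ 0 := by
    rw [hK]
    exact (ENNReal.ofReal_pos.mpr (lt_of_lt_of_le one_pos (le_max_left _ _))).ne'
  have hm10 : m1 ≠ 0 := by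
    rw [hm1]
    exact (ENNReal.ofReal_pos.mpr (lt_min one_pos (Real.rpow_pos_of_pos (by norm_num) _))).ne'
  have hC₁0 : C₁ ≠ 0 := by
    rw [hC₁]
    exact mul_ne_zero (mul_ne_zero (ENNReal.rpow_pos hcA hcAt).ne' hK0)
      (ENNReal.inv_ne_zero.mpr ENNReal.ofReal_ne_top)
  have hC₁t : C₁ ≠ ⊤ := by
    rw [hC₁]
    exact ENNReal.mul_ne_top (ENNReal.mul_ne_top (rpow_ne_top' hcA0 hcAt _)
      ENNReal.ofReal_ne_top) (ENNReal.inv_ne_top.mpr hm10)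
  set c : ℝ≥0∞ := ENNReal.ofReal (1 / 4) * C₁⁻¹ ^ qinv with hc
  have hcpos : 0 < c := by
    rw [hc]
    exact ENNReal.mul_pos (ENNReal.ofReal_pos.mpr (by norm_num)).ne'
      (ENNReal.rpow_pos (ENNReal.inv_pos.mpr hC₁t) (ENNReal.inv_ne_top.mpr hC₁0)).ne'
  refine ⟨c, hcpos, ?_⟩
  intro G _ mG _ vol hvol D μ r hr hbase x
  haveI : Countable D.ι := D.countable
  classical
  set f : ℝ → ℝ≥0∞ := fun t =>
    (μ (Metric.ball x t) / ENNReal.ofReal (t ^ β)) ^ qinv * ENNReal.ofReal t⁻¹ with hf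
  set A : {Q : D.ι // (8 : ℝ) ^ D.gen Q ≤ r / 8 ^ (3 : ℕ)} → Set ℝ := fun Q =>
    if x ∈ D.cube Q.1
    then Set.Ioo (2 * (8 : ℝ) ^ (D.gen Q.1 + 1)) (4 * (8 : ℝ) ^ (D.gen Q.1 + 1))
    else ∅ with hA
  have hmeas : ∀ Q, MeasurableSet (A Q) := by
    intro Q
    rw [hA]
    dsimp only
    split
    · exact measurableSet_Ioo
    · exact MeasurableSet.empty
  have hdisj : Pairwise (Function.onFun Disjoint A) := by
    intro Q Q' hne
    rw [Function.onFun, hA]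
    dsimp only
    by_cases h1 : x ∈ D.cube Q.1
    swap
    · simp [h1]
    by_cases h2 : x ∈ D.cube Q'.1
    swap
    · simp [h2]
    rw [if_pos h1, if_pos h2]
    have hgen : D.gen Q.1 ≠ D.gen Q'.1 := by
      intro hg
      have hQne : Q.1 ≠ Q'.1 := fun h => hne (Subtype.ext h)
      exact Set.disjoint_left.mp (D.pairwise_disjoint _ _ hQne hg) h1 h2
    rcases hgen.lt_or_gt with hlt | hlt
    · exact ioo_helper hlt
    · exact (ioo_helper hlt).symm
  have hsub : ∀ Q, A Q ⊆ Set.Ioo 0 r := by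
    intro Q
    rw [hA]
    dsimp only
    split
    · intro t ht
      have hgQ : (8 : ℝ) ^ D.gen Q.1 ≤ r / 512 := by
        have h := Q.2
        norm_num at h
        convert h using 2 <;> norm_num
      have h8 : (8 : ℝ) ^ (D.gen Q.1 + 1) = 8 * (8 : ℝ) ^ D.gen Q.1 := by
        rw [zpow_add_one₀ (by norm_num : (8:ℝ) ≠ 0)]; ring
      have hpos : (0 : ℝ) < (8 : ℝ) ^ (D.gen Q.1 + 1) := zpow_pos (by norm_num) _
      constructor
      · have := ht.1; nlinarith
      · have := ht.2
        rw [h8] at this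
        nlinarith
    · exact fun t ht => absurd ht (Set.notMem_empty t)
  have hkey : ∀ Q, c * Set.indicator (D.cube Q.1)
      (fun _ => (μ (D.cube Q.1) / (vol (D.cube Q.1)) ^ e) ^ qinv) x
      ≤ ∫⁻ t in A Q, f t := by
    intro Q
    by_cases hx : x ∈ D.cube Q.1
    swap
    · simp [Set.indicator_of_notMem hx]
    rw [Set.indicator_of_mem hx]
    set g : ℤ := D.gen Q.1 with hg
    set a : ℝ := (8 : ℝ) ^ g with ha'
    have ha : 0 < a := zpow_pos (by norm_num) _
    have h8 : (8 : ℝ) ^ (g + 1) = 8 * a := by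
      rw [zpow_add_one₀ (by norm_num : (8:ℝ) ≠ 0)]; ring
    have hAQ : A Q = Set.Ioo (16 * a) (32 * a) := by
      rw [hA]
      dsimp only
      rw [if_pos hx, ← hg, h8,
        show 2 * (8 * a) = 16 * a from by ring, show 4 * (8 * a) = 32 * a from by ring]
    set V : ℝ≥0∞ := vol (D.cube Q.1) with hV
    have hV1 : cA * ENNReal.ofReal (a ^ M) ≤ V := by
      rw [← hvol (D.center Q.1) a ha]
      exact measure_mono (D.ball_subset Q.1)
    have hV2 : V ≤ cA * ENNReal.ofReal ((8 * a) ^ M) := by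
      rw [← hvol (D.center Q.1) (8 * a) (by positivity)]
      have h := D.subset_ball Q.1
      rw [← hg, h8] at h
      exact measure_mono h
    have hcube : D.cube Q.1 ⊆ Metric.ball x (16 * a) := by
      intro y hy
      have h1 := D.subset_ball Q.1 hy
      have h2 := D.subset_ball Q.1 hx
      rw [Metric.mem_ball, ← hg, h8] at h1 h2
      rw [Metric.mem_ball]
      calc dist y x ≤ dist y (D.center Q.1) + dist (D.center Q.1) x := dist_triangle _ _ _
        _ = dist y (D.center Q.1) + dist x (D.center Q.1) := by rw [dist_comm (D.center Q.1) x]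
        _ < 8 * a + 8 * a := by linarith
        _ = 16 * a := by ring
    set v : ℝ≥0∞ := (μ (D.cube Q.1) / V ^ e) ^ qinv with hv
    have hpt : ∀ t ∈ Set.Ioo (16 * a) (32 * a),
        C₁⁻¹ ^ qinv * v * ENNReal.ofReal (64 * a)⁻¹ ≤ f t := by
      intro t ht
      have ht0 : 0 < t := lt_trans (by positivity) ht.1
      have hb1 : μ (D.cube Q.1) ≤ μ (Metric.ball x t) :=
        measure_mono (hcube.trans (Metric.ball_subset_ball ht.1.le))
      have hb2 : ENNReal.ofReal (t ^ β) ≤ C₁ * V ^ e := by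
        have := key_vol M α p cA hM hcA0 hcAt V a t ha hV1 hV2
          (by nlinarith [ht.1]) (by nlinarith [ht.2])
        rw [← hβ, ← he, ← hK, ← hm1, ← hC₁] at this
        exact this
      have hdiv : μ (D.cube Q.1) / (C₁ * V ^ e)
          ≤ μ (Metric.ball x t) / ENNReal.ofReal (t ^ β) :=
        ENNReal.div_le_div hb1 hb2
      have hsplit : μ (D.cube Q.1) / (C₁ * V ^ e) = C₁⁻¹ * (μ (D.cube Q.1) / V ^ e) := by
        simp only [div_eq_mul_inv]
        rw [ENNReal.mul_inv (Or.inl hC₁0) (Or.inl hC₁t)]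
        ring
      have hrw : (μ (D.cube Q.1) / (C₁ * V ^ e)) ^ qinv = C₁⁻¹ ^ qinv * v := by
        rw [hsplit, ENNReal.mul_rpow_of_nonneg _ _ hqpos.le, hv]
      have hinv : ENNReal.ofReal (64 * a)⁻¹ ≤ ENNReal.ofReal t⁻¹ := by
        apply ENNReal.ofReal_le_ofReal
        have h32 : t ≤ 64 * a := by nlinarith [ht.2]
        exact inv_anti₀ ht0 h32
      calc C₁⁻¹ ^ qinv * v * ENNReal.ofReal (64 * a)⁻¹
          = (μ (D.cube Q.1) / (C₁ * V ^ e)) ^ qinv * ENNReal.ofReal (64 * a)⁻¹ := by rw [hrw]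
        _ ≤ (μ (Metric.ball x t) / ENNReal.ofReal (t ^ β)) ^ qinv * ENNReal.ofReal t⁻¹ :=
            mul_le_mul' (ENNReal.rpow_le_rpow hdiv hqpos.le) hinv
        _ = f t := by rw [hf]
    rw [hAQ]
    have hq4 : ENNReal.ofReal (64 * a)⁻¹ * ENNReal.ofReal (32 * a - 16 * a)
        = ENNReal.ofReal (1 / 4) := by
      rw [← ENNReal.ofReal_mul (by positivity)]
      congr 1
      field_simp
      ring
    calc c * v = C₁⁻¹ ^ qinv * v * ENNReal.ofReal (64 * a)⁻¹
          * ENNReal.ofReal (32 * a - 16 * a) := by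
          rw [hc, show C₁⁻¹ ^ qinv * v * ENNReal.ofReal (64 * a)⁻¹
              * ENNReal.ofReal (32 * a - 16 * a)
            = ENNReal.ofReal (64 * a)⁻¹ * ENNReal.ofReal (32 * a - 16 * a)
              * (C₁⁻¹ ^ qinv * v) from by ring, hq4]
          ring
      _ = (C₁⁻¹ ^ qinv * v * ENNReal.ofReal (64 * a)⁻¹) * volume (Set.Ioo (16 * a) (32 * a)) := by
          rw [Real.volume_Ioo]
      _ = ∫⁻ _ in Set.Ioo (16 * a) (32 * a),
            (C₁⁻¹ ^ qinv * v * ENNReal.ofReal (64 * a)⁻¹) := (setLIntegral_const _ _).symm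
      _ ≤ ∫⁻ t in Set.Ioo (16 * a) (32 * a), f t := setLIntegral_mono' measurableSet_Ioo hpt
  calc c * ∑' Q : {Q : D.ι // (8 : ℝ) ^ D.gen Q ≤ r / 8 ^ (3 : ℕ)},
        Set.indicator (D.cube Q.1)
          (fun _ => (μ (D.cube Q.1) / (vol (D.cube Q.1)) ^ e) ^ qinv) x
      = ∑' Q : {Q : D.ι // (8 : ℝ) ^ D.gen Q ≤ r / 8 ^ (3 : ℕ)},
          c * Set.indicator (D.cube Q.1)
            (fun _ => (μ (D.cube Q.1) / (vol (D.cube Q.1)) ^ e) ^ qinv) x :=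
        ENNReal.tsum_mul_left.symm
    _ ≤ ∑' Q, ∫⁻ t in A Q, f t := ENNReal.tsum_le_tsum hkey
    _ = ∫⁻ t in ⋃ Q, A Q, f t := (lintegral_iUnion hmeas hdisj f).symm
    _ ≤ ∫⁻ t in Set.Ioo 0 r, f t := lintegral_mono_set (Set.iUnion_subset hsub)
    _ = wolffPot μ α p M r x := by
        rw [wolffPot, hf]
end

section
/- Let A > 0, p > 1, q > p - 1, with p' = p/(p-1), and suppose C > 0 satisfies C ≤ ((q-p+1)/(q A max{1, 2^{p'-2}}))^{q(p'-1)} · ((p-1)/(q-p+1)). Define a sequence (c_k) by c_1 = A and c_k = A max{1, 2^{p'-2}} (c_{k-1}^{q(p'-1)} C + 1) for k ≥ 2. Then c_k ≤ (A max{1, 2^{p'-2}} q)/(q - p + 1) for all k ≥ 1. -/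
/-!
With `M = A max{1, 2^{p'-2}}`, `e = q(p'-1) ≥ 0` and `B = M q/(q-p+1)`, the hypothesis on `C` says
exactly `B^e C ≤ (p-1)/(q-p+1)`, i.e. `M (B^e C + 1) ≤ B`. Hence the monotone map
`x ↦ M (x^e C + 1)` sends `[0, B]` into itself, and `c_1 = A ≤ M ≤ B` starts the orbit inside.
-/

open Real Set

theorem Set.MapsTo.mem_of_eq_apply_pred {α : Type*} {s : Set α} {f : α → α} {c : ℕ → α}
    (hf : MapsTo f s s) (h1 : c 1 ∈ s) (hc : ∀ k, 2 ≤ k → c k = f (c (k - 1))) :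
    ∀ k, 1 ≤ k → c k ∈ s := by
  intro k hk
  induction k, hk using Nat.le_induction with
  | base => exact h1
  | succ k hk ih => simpa [hc (k + 1) (by omega)] using hf ih

theorem mapsTo_Icc_mul_rpow_mul_add_one {M C e B : ℝ} (hM : 0 ≤ M) (hC : 0 ≤ C) (he : 0 ≤ e)
    (hB : M * (B ^ e * C + 1) ≤ B) :
    MapsTo (fun x => M * (x ^ e * C + 1)) (Icc 0 B) (Icc 0 B) := by
  rintro x ⟨hx0, hxB⟩
  refine ⟨by positivity, le_trans ?_ hB⟩
  dsimp only
  gcongr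

/-- The elementary iteration bound for the successive-approximation constants in the
construction of solutions to `-Δ_{G,p} u = u^q + ω`. -/
theorem stmt_8 (A p q C : ℝ) (hA : 0 < A) (hp : 1 < p) (hq : p - 1 < q)
    (p' : ℝ) (hp' : p' = p / (p - 1)) (hC : 0 < C)
    (hCle : C ≤ ((q - p + 1) / (q * A * max 1 (2 ^ (p' - 2)))) ^ (q * (p' - 1)) *
      ((p - 1) / (q - p + 1)))
    (c : ℕ → ℝ) (hc1 : c 1 = A)
    (hck : ∀ k, 2 ≤ k → c k = A * max 1 (2 ^ (p' - 2)) * (c (k - 1) ^ (q * (p' - 1)) * C + 1)) :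
    ∀ k, 1 ≤ k → c k ≤ A * max 1 (2 ^ (p' - 2)) * q / (q - p + 1) := by
  set M := A * max 1 (2 ^ (p' - 2))
  set e := q * (p' - 1)
  set B := M * q / (q - p + 1)
  have hAM : A ≤ M := le_mul_of_one_le_right hA.le (le_max_left _ _)
  have hqp : 0 < q - p + 1 := by linarith
  have he : 0 ≤ e := by
    have : 1 < p' := by rw [hp', one_lt_div (by linarith)]; linarith
    exact mul_nonneg (by linarith) (by linarith)
  have hM : 0 < M := hA.trans_le hAM
  have hB : 0 < B := div_pos (mul_pos hM (by linarith)) hqp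
  have hBe : B ^ e * C ≤ (p - 1) / (q - p + 1) := by
    have hbase : (q - p + 1) / (q * A * max 1 (2 ^ (p' - 2))) = B⁻¹ := by
      simp only [B, M, inv_div]; ring
    rwa [hbase, inv_rpow hB.le, le_inv_mul_iff₀ (by positivity)] at hCle
  have hfix : M * (B ^ e * C + 1) ≤ B := calc
    M * (B ^ e * C + 1) ≤ M * ((p - 1) / (q - p + 1) + 1) := by gcongr
    _ = B := by simp only [B]; field_simp; ring
  have hAB : A ≤ B := hAM.trans <| by
    rw [le_div_iff₀ hqp]; nlinarith
  intro k hk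
  exact ((mapsTo_Icc_mul_rpow_mul_add_one hM.le hC.le he hfix).mem_of_eq_apply_pred
    (by rw [hc1]; exact ⟨hA.le, hAB⟩) hck k hk).2
end
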